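/- arXiv:1105.3067 — 4 statements merged into one kernel-verified Lean document; each statement's English description precedes it below -/
import Mathlib

section
/- Let Q be a strongly connected finite quiver with no loops on n+1 vertices in which every primitive cycle has length n+1 (i.e., every simple directed cycle is Hamiltonian) and every vertex has in-degree and out-degree at least 2. Then Q contains, as a subquiver, a directed Hamiltonian cycle together with at least one additional arrow parallel to each of at least two distinct arrows of that cycle; in particular |C| + |V| - |A| - 1 ≥ 1 where C is the set of primitive cycles. -/
/-- A quiver (finite directed multigraph): a finite set of vertices `V`,
a finite set of arrows `A`, and source/target maps `s`, `t`. -/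
structure Quiv where
  V : Type
  A : Type
  [fintV : Fintype V]
  [fintA : Fintype A]
  [decV : DecidableEq V]
  [decA : DecidableEq A]
  s : A → V
  t : A → V

attribute [instance] Quiv.fintV Quiv.fintA Quiv.decV Quiv.decA

namespace Quiv

variable (Q : Quiv)

/-- Cyclic access to the entries of a nonempty list. -/
def cyc (l : List Q.A) (hl : l ≠ []) (i : ℕ) : Q.A :=
  l.get ⟨i % l.length, Nat.mod_lt _ (List.length_pos_iff.mpr hl)⟩

/-- `l` is a (nonempty) directed cycle: consecutive arrows compose, cyclically. -/
def IsCycleList (l : List Q.A) : Prop :=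
  ∃ hl : l ≠ [], ∀ i : ℕ, Q.t (Q.cyc l hl i) = Q.s (Q.cyc l hl (i + 1))

/-- A primitive (simple) cycle: a directed cycle visiting no vertex more than once. -/
def IsPrimCycle (l : List Q.A) : Prop :=
  Q.IsCycleList l ∧ (l.map Q.s).Nodup

/-- The set of primitive cycles of `Q`, each recorded by its (finite) set of arrows.
A primitive cycle is determined, up to rotation, by its set of arrows. -/
def primCycles : Set (Finset Q.A) :=
  { S | ∃ l : List Q.A, Q.IsPrimCycle l ∧ l.toFinset = S }

/-- The number of primitive cycles of `Q`. -/
noncomputable def numPrimCycles : ℕ := Q.primCycles.ncard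

/-- One-step reachability. -/
def Step (u v : Q.V) : Prop := ∃ a : Q.A, Q.s a = u ∧ Q.t a = v

/-- `Q` is strongly connected: every vertex is reachable from every other
by a directed path. -/
def StronglyConnected : Prop := ∀ u v : Q.V, Relation.ReflTransGen Q.Step u v

/-- `Q` has no loops. -/
def NoLoops : Prop := ∀ a : Q.A, Q.s a ≠ Q.t a

/-- In-degree of a vertex (arrows counted with multiplicity). -/
def inDeg (v : Q.V) : ℕ := (Finset.univ.filter fun a => Q.t a = v).card

/-- Out-degree of a vertex (arrows counted with multiplicity). -/
def outDeg (v : Q.V) : ℕ := (Finset.univ.filter fun a => Q.s a = v).card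

/-- `F(Q) = |C| + |V| - |A| - 1`, the codimension of the associated toric variety. -/
noncomputable def F : ℤ :=
  (Q.numPrimCycles : ℤ) + (Fintype.card Q.V : ℤ) - (Fintype.card Q.A : ℤ) - 1


/-
Choose one outgoing arrow `σ v` at every vertex `v`. The map `v ↦ t (σ v)` on the finite vertex
set has a periodic orbit, and the chosen arrows along it form a primitive cycle. Since every
primitive cycle is Hamiltonian, that orbit is all of `V`: the map is a cyclic permutation and the
arrows `σ v` form a Hamiltonian cycle. Replacing `σ` at the vertex `s b` by an arbitrary arrow `b`
must again give an injective map, which forces `t b = t (σ (s b))`, so arrows with a common source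
are parallel; out-degree `≥ 2` at the two ends of an arrow then yields the two extra arrows.
Distinct choices of `σ` give distinct cycles, hence `|C| ≥ ∏ outdeg v ≥ ∑ outdeg v = |A|`, and
`|V| ≥ 2` gives `|C| + |V| - |A| - 1 ≥ 1`.
-/

open Function

theorem _root_.Finite.exists_mem_periodicPts {α : Type*} [Finite α] [Nonempty α] (f : α → α) :
    ∃ x, x ∈ periodicPts f := by
  obtain ⟨a⟩ : Nonempty α := inferInstance
  obtain ⟨m, n, heq, hne⟩ : ∃ m n, f^[m] a = f^[n] a ∧ m ≠ n := by
    simpa [Injective] using not_injective_infinite_finite (f^[·] a)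
  wlog hmn : m < n generalizing m n
  · exact this n m heq.symm hne.symm (by omega)
  refine ⟨f^[m] a, mk_mem_periodicPts (n := n - m) (by omega) ?_⟩
  rw [IsPeriodicPt, IsFixedPt, ← iterate_add_apply, Nat.sub_add_cancel hmn.le, heq]

theorem _root_.Finset.sum_le_prod_of_two_le {ι : Type*} (s : Finset ι) (f : ι → ℕ)
    (h : ∀ i ∈ s, 2 ≤ f i) : ∑ i ∈ s, f i ≤ ∏ i ∈ s, f i := by
  induction s using Finset.cons_induction with
  | empty => simp
  | cons a s _ ih =>
    rw [Finset.sum_cons, Finset.prod_cons]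
    have hsum := ih fun i hi => h i (Finset.mem_cons_of_mem hi)
    rcases s.eq_empty_or_nonempty with rfl | ⟨b, hb⟩
    · simp
    have hprod : 2 ≤ ∏ i ∈ s, f i :=
      (h b (Finset.mem_cons_of_mem hb)).trans
        ((Finset.single_le_sum (fun _ _ => Nat.zero_le _) hb).trans hsum)
    exact (Nat.add_le_add_left hsum _).trans
      (Nat.add_le_mul (h a (Finset.mem_cons_self a s)) hprod)

variable {Q}

theorem isCycleList_iff {l : List Q.A} :
    Q.IsCycleList l ↔ l ≠ [] ∧ l.map Q.t = (l.map Q.s).rotate 1 := by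
  constructor
  · rintro ⟨hl, h⟩
    refine ⟨hl, List.ext_getElem (by simp) fun i hi _ => ?_⟩
    have hi' : i < l.length := by simpa using hi
    simpa [cyc, List.getElem_rotate, Nat.mod_eq_of_lt hi'] using h i
  · rintro ⟨hl, h⟩
    refine ⟨hl, fun i => ?_⟩
    have hpos := List.length_pos_iff.mpr hl
    have := congrArg (·[i % l.length]?) h
    simpa [cyc, List.getElem?_rotate, Nat.mod_lt _ hpos, Nat.mod_add_mod] using this

variable (Q) in
def PrimCyclesHamiltonian : Prop :=
  ∀ l : List Q.A, Q.IsPrimCycle l → l.length = Fintype.card Q.V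

variable (Q) in
abbrev SourceSection : Type := (v : Q.V) → {a : Q.A // Q.s a = v}

namespace SourceSection

def next (σ : Q.SourceSection) (v : Q.V) : Q.V := Q.t (σ v)

noncomputable def orbitCycle (σ : Q.SourceSection) (x : Q.V) : List Q.A :=
  (List.range (minimalPeriod σ.next x)).map fun i => (σ (σ.next^[i] x)).1

theorem map_s_orbitCycle (σ : Q.SourceSection) (x : Q.V) :
    (σ.orbitCycle x).map Q.s = (List.range (minimalPeriod σ.next x)).map (σ.next^[·] x) := by
  simp [orbitCycle, comp_def, (σ _).2]

theorem isPrimCycle_orbitCycle (σ : Q.SourceSection) {x : Q.V} (hx : x ∈ periodicPts σ.next) :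
    Q.IsPrimCycle (σ.orbitCycle x) := by
  have hpos := minimalPeriod_pos_of_mem_periodicPts hx
  refine ⟨isCycleList_iff.mpr ⟨?_, ?_⟩, ?_⟩
  · simpa [orbitCycle] using hpos.ne'
  · rw [σ.map_s_orbitCycle]
    refine List.ext_getElem (by simp [orbitCycle]) fun i hi _ => ?_
    simp only [orbitCycle, List.getElem_map, List.getElem_rotate, List.getElem_range,
      List.length_map, List.length_range, iterate_mod_minimalPeriod_eq, iterate_succ_apply']
    rw [List.getElem_range]
    rfl
  · rw [σ.map_s_orbitCycle]
    exact List.nodup_range.map_on fun i hi j hj h =>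
      iterate_injOn_Iio_minimalPeriod (List.mem_range.mp hi) (List.mem_range.mp hj) h

theorem minimalPeriod_next_eq_card (hham : Q.PrimCyclesHamiltonian) (σ : Q.SourceSection)
    {x : Q.V} (hx : x ∈ periodicPts σ.next) : minimalPeriod σ.next x = Fintype.card Q.V := by
  simpa [orbitCycle] using hham _ (σ.isPrimCycle_orbitCycle hx)

theorem exists_iterate_eq (hham : Q.PrimCyclesHamiltonian) (σ : Q.SourceSection) {x : Q.V}
    (hx : x ∈ periodicPts σ.next) (y : Q.V) : ∃ i < minimalPeriod σ.next x, σ.next^[i] x = y := by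
  have hcard : ((Finset.range (minimalPeriod σ.next x)).image (σ.next^[·] x)).card =
      Fintype.card Q.V := by
    rw [Finset.card_image_of_injOn (Finset.coe_range _ ▸ iterate_injOn_Iio_minimalPeriod),
      Finset.card_range, σ.minimalPeriod_next_eq_card hham hx]
  have hy := Finset.mem_univ y
  rw [← Finset.eq_univ_of_card _ hcard] at hy
  simpa using hy

theorem mem_periodicPts_next (hham : Q.PrimCyclesHamiltonian) (σ : Q.SourceSection) (y : Q.V) :
    y ∈ periodicPts σ.next := by
  have : Nonempty Q.V := ⟨y⟩
  obtain ⟨x, hx⟩ := Finite.exists_mem_periodicPts σ.next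
  obtain ⟨i, -, rfl⟩ := σ.exists_iterate_eq hham hx y
  rw [← minimalPeriod_pos_iff_mem_periodicPts, minimalPeriod_apply_iterate hx]
  exact minimalPeriod_pos_of_mem_periodicPts hx

theorem next_injective (hham : Q.PrimCyclesHamiltonian) (σ : Q.SourceSection) :
    Injective σ.next :=
  injective_iff_periodicPts_eq_univ.mpr (Set.eq_univ_of_forall (σ.mem_periodicPts_next hham))

theorem t_eq_next_s (hham : Q.PrimCyclesHamiltonian) (σ : Q.SourceSection) (b : Q.A) :
    Q.t b = σ.next (Q.s b) := by
  let τ : Q.SourceSection := update σ (Q.s b) ⟨b, rfl⟩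
  obtain ⟨w, hw⟩ := Finite.surjective_of_injective (σ.next_injective hham) (Q.t b)
  have hτ : ∀ v, v ≠ Q.s b → τ.next v = σ.next v := fun v hv => by
    simp [τ, next, update_of_ne hv]
  have : w = Q.s b := by
    by_contra hne
    exact hne (τ.next_injective hham (by rw [hτ w hne, hw]; simp [τ, next]))
  rw [← hw, this]

theorem mem_orbitCycle_iff (hham : Q.PrimCyclesHamiltonian) (σ : Q.SourceSection) {x : Q.V}
    (hx : x ∈ periodicPts σ.next) (b : Q.A) : b ∈ σ.orbitCycle x ↔ (σ (Q.s b)).1 = b := by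
  constructor
  · intro hb
    obtain ⟨i, -, rfl⟩ := by simpa [orbitCycle] using hb
    rw [(σ (σ.next^[i] x)).2]
  · intro hb
    obtain ⟨i, hi, hix⟩ := σ.exists_iterate_eq hham hx (Q.s b)
    simp only [orbitCycle, List.mem_map, List.mem_range]
    exact ⟨i, hi, by rw [hix, hb]⟩

theorem toFinset_orbitCycle (hham : Q.PrimCyclesHamiltonian) (σ : Q.SourceSection) {x : Q.V}
    (hx : x ∈ periodicPts σ.next) :
    (σ.orbitCycle x).toFinset = Finset.univ.image fun v => (σ v).1 := by
  ext b
  simp only [List.mem_toFinset, σ.mem_orbitCycle_iff hham hx, Finset.mem_image,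
    Finset.mem_univ, true_and]
  refine ⟨fun hb => ⟨_, hb⟩, ?_⟩
  rintro ⟨v, rfl⟩
  rw [(σ v).2]

theorem exists_parallel_not_mem_orbitCycle (hham : Q.PrimCyclesHamiltonian)
    (σ : Q.SourceSection) {x : Q.V} (hx : x ∈ periodicPts σ.next) {u : Q.V}
    (hu : 2 ≤ Q.outDeg u) : ∃ b, b ∉ σ.orbitCycle x ∧ Q.s b = u ∧ Q.t b = Q.t (σ u) := by
  obtain ⟨b, hb, hba⟩ := Finset.exists_mem_ne hu (σ u).1
  obtain rfl : Q.s b = u := (Finset.mem_filter.mp hb).2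
  exact ⟨b, fun hmem => hba ((σ.mem_orbitCycle_iff hham hx b).mp hmem).symm, rfl,
    σ.t_eq_next_s hham b⟩

theorem image_injective :
    Injective fun σ : Q.SourceSection => Finset.univ.image fun v => (σ v).1 := by
  intro σ τ h
  dsimp only at h
  funext v
  obtain ⟨w, -, hw⟩ := Finset.mem_image.mp (h ▸ Finset.mem_image_of_mem _ (Finset.mem_univ v) :
    (σ v).1 ∈ Finset.univ.image fun v => (τ v).1)
  obtain rfl : w = v := by rw [← (τ w).2, hw, (σ v).2]
  exact Subtype.ext hw.symm

end SourceSection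

theorem nonempty_sourceSection (h : ∀ v, 1 ≤ Q.outDeg v) : Nonempty Q.SourceSection := by
  choose f hf using fun v => Finset.card_pos.mp (h v)
  exact ⟨fun v => ⟨f v, (Finset.mem_filter.mp (hf v)).2⟩⟩

theorem card_sourceSection : Fintype.card Q.SourceSection = ∏ v, Q.outDeg v := by
  simp [SourceSection, Fintype.card_pi, outDeg, Fintype.card_subtype]

theorem card_arrow_eq_sum_outDeg : Fintype.card Q.A = ∑ v, Q.outDeg v :=
  Finset.card_eq_sum_card_fiberwise fun a _ => Finset.mem_univ (Q.s a)

theorem prod_outDeg_le_numPrimCycles [Nonempty Q.V] (hham : Q.PrimCyclesHamiltonian) :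
    ∏ v, Q.outDeg v ≤ Q.numPrimCycles := by
  have hrange : Set.range (fun σ : Q.SourceSection => Finset.univ.image fun v => (σ v).1) ⊆
      Q.primCycles := by
    rintro _ ⟨σ, rfl⟩
    obtain ⟨x, hx⟩ := Finite.exists_mem_periodicPts σ.next
    exact ⟨_, σ.isPrimCycle_orbitCycle hx, σ.toFinset_orbitCycle hham hx⟩
  calc ∏ v, Q.outDeg v = Nat.card Q.SourceSection := by
        rw [Nat.card_eq_fintype_card, card_sourceSection]
    _ = _ := (Set.ncard_range_of_injective SourceSection.image_injective).symm
    _ ≤ Q.numPrimCycles := Set.ncard_le_ncard hrange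

theorem one_le_F (hham : Q.PrimCyclesHamiltonian) (hV : 1 < Fintype.card Q.V)
    (hdeg : ∀ v, 2 ≤ Q.outDeg v) : 1 ≤ Q.F := by
  have : Nonempty Q.V := Fintype.card_pos_iff.mp (by omega)
  have hcycles := prod_outDeg_le_numPrimCycles hham
  have hsum := Finset.sum_le_prod_of_two_le Finset.univ Q.outDeg fun v _ => hdeg v
  rw [F, card_arrow_eq_sum_outDeg]
  omega

theorem stmt_2_general (Q : Quiv) (n : ℕ) (hcard : Fintype.card Q.V = n + 1)
    (hNL : Q.NoLoops)
    (hham : ∀ l : List Q.A, Q.IsPrimCycle l → l.length = n + 1)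
    (hdeg : ∀ v : Q.V, 2 ≤ Q.inDeg v ∧ 2 ≤ Q.outDeg v) :
    (∃ l : List Q.A, Q.IsPrimCycle l ∧ l.length = n + 1 ∧
      ∃ a₁ a₂ b₁ b₂ : Q.A, a₁ ∈ l ∧ a₂ ∈ l ∧ a₁ ≠ a₂ ∧
        b₁ ∉ l ∧ b₂ ∉ l ∧ b₁ ≠ b₂ ∧
        Q.s b₁ = Q.s a₁ ∧ Q.t b₁ = Q.t a₁ ∧ Q.s b₂ = Q.s a₂ ∧ Q.t b₂ = Q.t a₂) ∧
    1 ≤ Q.F := by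
  have hQ : Q.PrimCyclesHamiltonian := fun l hl => (hham l hl).trans hcard.symm
  have : Nonempty Q.V := Fintype.card_pos_iff.mp (by omega)
  obtain ⟨σ⟩ := nonempty_sourceSection fun v => one_le_two.trans (hdeg v).2
  obtain ⟨x, hx⟩ := Finite.exists_mem_periodicPts σ.next
  set a := (σ (Classical.arbitrary Q.V)).1
  obtain ⟨b₁, hb₁, hs₁, ht₁⟩ := σ.exists_parallel_not_mem_orbitCycle hQ hx (hdeg (Q.s a)).2
  obtain ⟨b₂, hb₂, hs₂, ht₂⟩ := σ.exists_parallel_not_mem_orbitCycle hQ hx (hdeg (Q.t a)).2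
  have hmem (u : Q.V) : (σ u).1 ∈ σ.orbitCycle x :=
    (σ.mem_orbitCycle_iff hQ hx _).mpr (by rw [(σ u).2])
  have hprim := σ.isPrimCycle_orbitCycle hx
  refine ⟨⟨σ.orbitCycle x, hprim, hham _ hprim, (σ (Q.s a)).1, (σ (Q.t a)).1, b₁, b₂,
    hmem _, hmem _, fun h => hNL a ?_, hb₁, hb₂, fun h => hNL a ?_, by rw [hs₁, (σ (Q.s a)).2], ht₁,
    by rw [hs₂, (σ (Q.t a)).2], ht₂⟩, one_le_F hQ (Fintype.one_lt_card_iff.mpr ⟨_, _, hNL a⟩)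
    fun v => (hdeg v).2⟩
  · rw [← (σ (Q.s a)).2, h, (σ (Q.t a)).2]
  · rw [← hs₁, h, hs₂]

/-- if `Q` is strongly connected, has no loops, has `n+1` vertices, every
primitive cycle is Hamiltonian (length `n+1`) and every vertex has in- and out-degree
at least 2, then `Q` contains a Hamiltonian cycle together with extra arrows parallel
to (at least) two distinct arrows of that cycle; in particular `F(Q) ≥ 1`. -/
theorem stmt_2 (Q : Quiv) (n : ℕ) (hcard : Fintype.card Q.V = n + 1)
    (hSC : Q.StronglyConnected) (hNL : Q.NoLoops)
    (hham : ∀ l : List Q.A, Q.IsPrimCycle l → l.length = n + 1)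
    (hdeg : ∀ v : Q.V, 2 ≤ Q.inDeg v ∧ 2 ≤ Q.outDeg v) :
    (∃ l : List Q.A, Q.IsPrimCycle l ∧ l.length = n + 1 ∧
      ∃ a₁ a₂ b₁ b₂ : Q.A, a₁ ∈ l ∧ a₂ ∈ l ∧ a₁ ≠ a₂ ∧
        b₁ ∉ l ∧ b₂ ∉ l ∧ b₁ ≠ b₂ ∧
        Q.s b₁ = Q.s a₁ ∧ Q.t b₁ = Q.t a₁ ∧ Q.s b₂ = Q.s a₂ ∧ Q.t b₂ = Q.t a₂) ∧
    1 ≤ Q.F :=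
  stmt_2_general Q n hcard hNL hham hdeg

end Quiv
end

section
/- Let Q be a quiver with dimension vector α = (1, ..., 1), all vertices one-dimensional. Then the affine quotient variety iss_α Q is the toric variety whose coordinate ring is the monomial subalgebra of ℂ[Rep_α Q] generated by the monomials x_c = ∏_{a ∈ c} x_a, where c runs over the primitive cycles of Q and x_a are the coordinates corresponding to the arrows. In particular, the toric ideal Ker(φ), where φ : ℂ[y_c : c primitive cycle] → ℂ[x_a : a ∈ A] sends y_c to x_c, is generated by binomials, and a binomial ∏ y_{c_i} − ∏ y_{d_j} lies in Ker(φ) if and only if the multiset sum of the arrow sets of the c_i equals that of the d_j. -/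
namespace Quiv

variable (Q : Quiv)

open MvPolynomial in
/-- The monomial map `φ` sending the variable `y_c` of a primitive cycle `c` to the
monomial `x_c = ∏_{a ∈ c} x_a`. -/
noncomputable def cycMap (Q : Quiv) :
    MvPolynomial {c : Finset Q.A // c ∈ Q.primCycles} ℂ →ₐ[ℂ] MvPolynomial Q.A ℂ :=
  MvPolynomial.aeval fun c => ∏ a ∈ c.1, MvPolynomial.X a

open MvPolynomial in
/-- The action of the torus element `g : V → ℂˣ` on `ℂ[Rep_α Q] = ℂ[x_a : a ∈ A]`
(for `α ≡ 1`): `x_a ↦ g_{t(a)} g_{s(a)}⁻¹ x_a`. -/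
noncomputable def torusAct (Q : Quiv) (g : Q.V → ℂˣ) :
    MvPolynomial Q.A ℂ →ₐ[ℂ] MvPolynomial Q.A ℂ :=
  MvPolynomial.aeval fun a => MvPolynomial.C ((g (Q.t a) : ℂ) * (↑(g (Q.s a)))⁻¹) * MvPolynomial.X a

end Quiv

/-!
A torus element `g` multiplies the monomial `x^m` (`m` a multiset of arrows) by
`∏_{a ∈ m} g_{t a} / g_{s a}`, so `x^m` is invariant exactly when `m` is balanced: every vertex
is the head of as many arrows of `m` as it is the tail of. Following arrows of a nonzero balanced
`m` until a vertex repeats produces a primitive cycle inside `m`, and removing it leaves a balanced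
multiset; hence every invariant monomial is a product of cycle monomials `x_c`.

The map `φ` sends monomials to monomials, so for `p ∈ Ker φ` the coefficients of `p` sum to zero
on each fibre of the induced map on exponents. Replacing every monomial of `p` by a fixed
representative of its fibre therefore changes `p` by a combination of binomials in `Ker φ` and
produces `0`.
-/

namespace MvPolynomial

variable {σ τ : Type*}

section CommSemiring

variable {R : Type*} [CommSemiring R]

theorem prod_map_X_eq_monomial_toFinsupp [DecidableEq σ] (m : Multiset σ) :
    (m.map X).prod = (monomial (Multiset.toFinsupp m) 1 : MvPolynomial σ R) := by
  induction m using Multiset.induction with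
  | empty => simp
  | cons a m ih =>
    rw [Multiset.map_cons, Multiset.prod_cons, ih, ← Multiset.singleton_add,
      Multiset.toFinsupp_add, Multiset.toFinsupp_singleton, X, monomial_mul, one_mul]

theorem prod_X_eq_monomial_toFinsupp [DecidableEq σ] (S : Finset σ) :
    ∏ a ∈ S, X a = (monomial (Multiset.toFinsupp S.val) 1 : MvPolynomial σ R) := by
  rw [Finset.prod_eq_multiset_prod, prod_map_X_eq_monomial_toFinsupp]

theorem aeval_monomial_one_monomial (f : σ → τ →₀ ℕ) (u : σ →₀ ℕ) (r : R) :
    aeval (fun i => monomial (f i) (1 : R)) (monomial u r) =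
      monomial (u.sum fun i n => n • f i) r := by
  simp only [aeval_monomial, monomial_finsupp_sum_index, algebraMap_eq, monomial_pow, one_pow]

theorem coeff_aeval_monomial_one [DecidableEq τ] (f : σ → τ →₀ ℕ) (p : MvPolynomial σ R)
    (w : τ →₀ ℕ) :
    coeff w (aeval (fun i => monomial (f i) (1 : R)) p) =
      ∑ u ∈ p.support with (u.sum fun i n => n • f i) = w, coeff u p := by
  conv_lhs => rw [p.as_sum]
  simp only [map_sum, aeval_monomial_one_monomial, coeff_sum, coeff_monomial, Finset.sum_filter]

end CommSemiring

section CommRing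

variable {R : Type*} [CommRing R]

theorem monomial_sub_monomial_mem_ker_aeval_monomial_one_iff [Nontrivial R]
    (f : σ → τ →₀ ℕ) (u v : σ →₀ ℕ) :
    monomial u (1 : R) - monomial v 1 ∈
        RingHom.ker (aeval fun i => monomial (f i) (1 : R)).toRingHom ↔
      (u.sum fun i n => n • f i) = v.sum fun i n => n • f i := by
  rw [RingHom.mem_ker, AlgHom.toRingHom_eq_coe, RingHom.coe_coe, map_sub, sub_eq_zero,
    aeval_monomial_one_monomial, aeval_monomial_one_monomial, monomial_left_inj one_ne_zero]

theorem ker_aeval_monomial_one_eq_span_binomials (f : σ → τ →₀ ℕ) :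
    RingHom.ker (aeval fun i => monomial (f i) (1 : R)).toRingHom =
      Ideal.span {p | p ∈ RingHom.ker (aeval fun i => monomial (f i) (1 : R)).toRingHom ∧
        ∃ u v : σ →₀ ℕ, p = monomial u (1 : R) - monomial v 1} := by
  classical
  set φ := (aeval (R := R) fun i => monomial (f i) (1 : R)).toRingHom
  set W : (σ →₀ ℕ) → τ →₀ ℕ := fun u => u.sum fun i n => n • f i
  have hφ : ∀ u r, φ (monomial u r) = monomial (W u) r := aeval_monomial_one_monomial f
  refine le_antisymm (fun p hp => ?_) (Ideal.span_le.mpr fun p hp => hp.1)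
  -- `rep w` is a monomial of `p` of weight `w`, whenever there is one
  set rep := Function.invFunOn W p.support
  have hrep : ∀ u ∈ p.support, W (rep (W u)) = W u := fun u hu =>
    Function.invFunOn_eq ⟨u, hu, rfl⟩
  have hsplit : p = ∑ u ∈ p.support, C (coeff u p) * (monomial u 1 - monomial (rep (W u)) 1) +
      ∑ u ∈ p.support, C (coeff u p) * monomial (rep (W u)) 1 := by
    rw [← Finset.sum_add_distrib]
    conv_lhs => rw [p.as_sum]
    exact Finset.sum_congr rfl fun u _ => by
      rw [← mul_add, sub_add_cancel, C_mul_monomial, mul_one]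
  have hfibres : ∑ u ∈ p.support, C (coeff u p) * monomial (rep (W u)) (1 : R) = 0 := by
    rw [← Finset.sum_fiberwise_of_maps_to (fun u hu => Finset.mem_image_of_mem W hu)]
    refine Finset.sum_eq_zero fun w _ => ?_
    calc ∑ u ∈ p.support with W u = w, C (coeff u p) * monomial (rep (W u)) (1 : R)
        = C (∑ u ∈ p.support with W u = w, coeff u p) * monomial (rep w) 1 := by
          rw [map_sum, Finset.sum_mul]
          exact Finset.sum_congr rfl fun u hu => by rw [(Finset.mem_filter.mp hu).2]
      _ = 0 := by
          rw [← coeff_aeval_monomial_one, show aeval _ p = φ p from rfl, hp, coeff_zero, C_0,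
            zero_mul]
  rw [hsplit, hfibres, add_zero]
  refine Ideal.sum_mem _ fun u hu => Ideal.mul_mem_left _ _ (Ideal.subset_span ⟨?_, u, _, rfl⟩)
  rw [RingHom.mem_ker, map_sub, hφ, hφ, hrep u hu, sub_self]

end CommRing

end MvPolynomial

namespace Quiv

open MvPolynomial

variable {Q : Quiv}

theorem IsCycleList.map_t_eq_map_s {l : List Q.A} (h : Q.IsCycleList l) :
    (l.map Q.t : Multiset Q.V) = l.map Q.s := by
  obtain ⟨hl, hcyc⟩ := h
  have hn : 0 < l.length := List.length_pos_iff.mpr hl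
  suffices l.map Q.t = (l.map Q.s).rotate 1 from
    this ▸ Multiset.coe_eq_coe.mpr (List.rotate_perm _ _)
  refine List.ext_getElem (by simp) fun i hi _ => ?_
  have hi : i < l.length := by simpa using hi
  simpa [cyc, List.get_eq_getElem, List.getElem_rotate, Nat.mod_eq_of_lt hi] using hcyc i

theorem isCycleList_map_range {n : ℕ} (hn : 0 < n) (g : ℕ → Q.A)
    (hg : ∀ k < n, Q.t (g k) = Q.s (g ((k + 1) % n))) :
    Q.IsCycleList ((List.range n).map g) := by
  have hne : (List.range n).map g ≠ [] := by
    simp only [ne_eq, List.map_eq_nil_iff, List.range_eq_nil]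
    omega
  refine ⟨hne, fun m => ?_⟩
  have hcyc : ∀ m, Q.cyc _ hne m = g (m % n) := fun m => by simp [cyc, List.get_eq_getElem]
  rw [hcyc, hcyc, hg _ (Nat.mod_lt _ hn), Nat.mod_add_mod]

theorem exists_isPrimCycle_of_walk (f : ℕ → Q.A) (hf : ∀ n, Q.s (f (n + 1)) = Q.t (f n)) :
    ∃ l, Q.IsPrimCycle l ∧ ∀ a ∈ l, ∃ n, f n = a := by
  classical
  have hrep : ∃ j, ∃ i < j, Q.s (f i) = Q.s (f j) := by
    obtain ⟨x, y, hxy, hv⟩ := Finite.exists_ne_map_eq_of_infinite fun n => Q.s (f n)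
    rcases hxy.lt_or_gt with h | h
    exacts [⟨y, x, h, hv⟩, ⟨x, y, h, hv.symm⟩]
  -- the walk first revisits a vertex at time `j`, closing the simple cycle `f i, …, f (j - 1)`
  obtain ⟨i, hij, hcycle⟩ := Nat.find_spec hrep
  set j := Nat.find hrep
  have hsimple : ∀ p q, p < q → q < j → Q.s (f p) ≠ Q.s (f q) := fun p q hpq hqj h =>
    Nat.find_min hrep hqj ⟨p, hpq, h⟩
  refine ⟨(List.range (j - i)).map fun k => f (i + k), ⟨?_, ?_⟩, by simp⟩
  · refine isCycleList_map_range (by omega) _ fun k hk => ?_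
    rw [← hf]
    rcases Nat.lt_or_ge (k + 1) (j - i) with h | h
    · rw [Nat.mod_eq_of_lt h, Nat.add_assoc]
    · rw [show k + 1 = j - i by omega, Nat.mod_self, add_zero, hcycle,
        show i + k + 1 = j by omega]
  · rw [List.map_map]
    refine List.Nodup.map_on (fun x hx y hy hxy => ?_) List.nodup_range
    simp only [List.mem_range] at hx hy
    by_contra hne
    rcases Nat.lt_or_gt_of_ne hne with h | h
    exacts [hsimple _ _ (by omega) (by omega) hxy, hsimple _ _ (by omega) (by omega) hxy.symm]

variable (Q) in
def IsBalanced (m : Multiset Q.A) : Prop := m.map Q.t = m.map Q.s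

theorem isBalanced_val_of_mem_primCycles {S : Finset Q.A} (hS : S ∈ Q.primCycles) :
    Q.IsBalanced S.val := by
  obtain ⟨l, ⟨hcyc, hnodup⟩, rfl⟩ := hS
  rw [IsBalanced, List.toFinset_val, (hnodup.of_map Q.s).dedup, Multiset.map_coe,
    Multiset.map_coe, hcyc.map_t_eq_map_s]

theorem IsBalanced.tsub {m n : Multiset Q.A} (hm : Q.IsBalanced m) (hn : Q.IsBalanced n)
    (hnm : n ≤ m) : Q.IsBalanced (m - n) := by
  have hsplit : ∀ f : Q.A → Q.V, (m - n).map f + n.map f = m.map f := fun f => by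
    rw [← Multiset.map_add, tsub_add_cancel_of_le hnm]
  exact add_right_cancel (b := n.map Q.t) (by rw [hsplit, hm, hn, hsplit])

theorem IsBalanced.exists_mem_primCycles_le {m : Multiset Q.A} (hm : Q.IsBalanced m)
    (hm0 : m ≠ 0) : ∃ S ∈ Q.primCycles, S.val ≠ 0 ∧ S.val ≤ m := by
  classical
  obtain ⟨a₀, ha₀⟩ := Multiset.exists_mem_of_ne_zero hm0
  have hnext : ∀ a : {a // a ∈ m}, ∃ b : {a // a ∈ m}, Q.s b = Q.t a := fun a => by
    obtain ⟨b, hb, hba⟩ := Multiset.mem_map.mp (hm ▸ Multiset.mem_map_of_mem Q.t a.2)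
    exact ⟨⟨b, hb⟩, hba⟩
  choose next hnext using hnext
  obtain ⟨l, hl, hlm⟩ := exists_isPrimCycle_of_walk (fun n => (next^[n] ⟨a₀, ha₀⟩).1)
    fun n => by rw [Function.iterate_succ_apply', hnext]
  have hval : l.toFinset.val = l := by
    rw [List.toFinset_val, (hl.2.of_map Q.s).dedup]
  refine ⟨l.toFinset, ⟨l, hl, rfl⟩, ?_, ?_⟩
  · simpa [hval] using hl.1.1
  · rw [Multiset.le_iff_subset l.toFinset.nodup, hval]
    intro a ha
    obtain ⟨n, rfl⟩ := hlm a ha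
    exact Subtype.property _

variable (R : Type*) [CommSemiring R] (Q) in
noncomputable def cycleAlgebra : Subalgebra R (MvPolynomial Q.A R) :=
  Algebra.adjoin R (Set.range fun c : {c : Finset Q.A // c ∈ Q.primCycles} => ∏ a ∈ c.1, X a)

theorem monomial_toFinsupp_mem_cycleAlgebra {R : Type*} [CommSemiring R] {m : Multiset Q.A}
    (hm : Q.IsBalanced m) (r : R) : monomial (Multiset.toFinsupp m) r ∈ Q.cycleAlgebra R := by
  induction m using Multiset.strongInductionOn with
  | ih m ih =>
  obtain rfl | hm0 := eq_or_ne m 0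
  · rw [Multiset.toFinsupp_zero, monomial_zero']
    exact Subalgebra.algebraMap_mem _ r
  obtain ⟨S, hS, hS0, hSm⟩ := hm.exists_mem_primCycles_le hm0
  have hlt : m - S.val < m := by
    simpa only [tsub_add_cancel_of_le hSm] using
      lt_add_of_pos_right (m - S.val) (pos_iff_ne_zero.mpr hS0)
  rw [← tsub_add_cancel_of_le hSm, Multiset.toFinsupp_add, ← mul_one r, ← monomial_mul]
  refine mul_mem (ih _ hlt (hm.tsub (isBalanced_val_of_mem_primCycles hS) hSm)) ?_
  rw [← prod_X_eq_monomial_toFinsupp]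
  exact Algebra.subset_adjoin ⟨⟨S, hS⟩, rfl⟩

variable (Q) in
def torusChar (g : Q.V → ℂˣ) (m : Multiset Q.A) : ℂˣ :=
  (m.map fun a => g (Q.t a) / g (Q.s a)).prod

theorem torusChar_eq_one_iff {m : Multiset Q.A} :
    (∀ g, Q.torusChar g m = 1) ↔ Q.IsBalanced m := by
  classical
  have hchar : ∀ g, Q.torusChar g m = ((m.map Q.t).map g).prod / ((m.map Q.s).map g).prod :=
    fun g => by simp only [torusChar, Multiset.prod_map_div, Multiset.map_map, Function.comp_def]
  refine ⟨fun h => Multiset.ext.mpr fun v => ?_, fun h g => by rw [hchar, h, div_self']⟩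
  have hpow : ∀ (u : ℂˣ) (M : Multiset Q.V), (M.map (Pi.mulSingle v u)).prod = u ^ M.count v :=
      fun u M => by
    rw [Multiset.prod_map_eq_pow_single v fun w hw _ => Pi.mulSingle_eq_of_ne hw _,
      Pi.mulSingle_eq_same]
  -- test against the torus element which is `2` at `v` and `1` elsewhere
  have h2 := h (Pi.mulSingle v (Units.mk0 2 two_ne_zero))
  rw [hchar, div_eq_one, hpow, hpow] at h2
  have h2' := congrArg Units.val h2
  simp only [Units.val_pow_eq_pow_val, Units.val_mk0] at h2'
  exact Nat.pow_right_injective le_rfl (by exact_mod_cast h2')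

theorem torusAct_monomial (g : Q.V → ℂˣ) (d : Q.A →₀ ℕ) (r : ℂ) :
    torusAct Q g (monomial d r) = monomial d (Q.torusChar g d.toMultiset * r) := by
  classical
  have hmono : ∀ c, (monomial d c : MvPolynomial Q.A ℂ) = C c * (d.toMultiset.map X).prod :=
      fun c => by
    rw [prod_map_X_eq_monomial_toFinsupp, Finsupp.toMultiset_toFinsupp, C_mul_monomial, mul_one]
  have hchar : (Q.torusChar g d.toMultiset : ℂ) =
      (d.toMultiset.map fun a => (g (Q.t a) : ℂ) * (↑(g (Q.s a)))⁻¹).prod := by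
    rw [torusChar, ← Units.coeHom_apply, map_multiset_prod, Multiset.map_map]
    simp only [Function.comp_def, Units.coeHom_apply, div_eq_mul_inv, Units.val_mul,
      Units.val_inv_eq_inv_val]
  simp only [hmono, hchar, map_mul, torusAct, aeval_C, algebraMap_eq, map_multiset_prod,
    Multiset.map_map, Function.comp_def, aeval_X, Multiset.prod_map_mul]
  ring

theorem coeff_torusAct (g : Q.V → ℂˣ) (p : MvPolynomial Q.A ℂ) (d : Q.A →₀ ℕ) :
    coeff d (torusAct Q g p) = Q.torusChar g d.toMultiset * coeff d p := by
  induction p using MvPolynomial.induction_on' with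
  | monomial e r =>
    rw [torusAct_monomial, coeff_monomial, coeff_monomial]
    split_ifs with h
    · rw [h]
    · rw [mul_zero]
  | add p q hp hq => rw [map_add, coeff_add, coeff_add, hp, hq, mul_add]

theorem isBalanced_toMultiset_of_mem_support {p : MvPolynomial Q.A ℂ}
    (hp : ∀ g, torusAct Q g p = p)
    {d : Q.A →₀ ℕ} (hd : d ∈ p.support) : Q.IsBalanced d.toMultiset :=
  torusChar_eq_one_iff.mp fun g => by
    have h := coeff_torusAct g p d
    rw [hp] at h
    exact Units.val_eq_one.mp ((mul_eq_right₀ (mem_support_iff.mp hd)).mp h.symm)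

theorem coe_cycleAlgebra_eq_invariants :
    (Q.cycleAlgebra ℂ : Set (MvPolynomial Q.A ℂ)) = {p | ∀ g, torusAct Q g p = p} := by
  classical
  refine Set.Subset.antisymm (fun p hp g => ?_) fun p hp => ?_
  · suffices Q.cycleAlgebra ℂ ≤ AlgHom.equalizer (torusAct Q g) (AlgHom.id ℂ _) from this hp
    refine Algebra.adjoin_le ?_
    rintro _ ⟨⟨S, hS⟩, rfl⟩
    change torusAct Q g (∏ a ∈ S, X a) = ∏ a ∈ S, X a
    rw [prod_X_eq_monomial_toFinsupp, torusAct_monomial, Multiset.toFinsupp_toMultiset,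
      torusChar_eq_one_iff.mpr (isBalanced_val_of_mem_primCycles hS), Units.val_one, one_mul]
  · rw [SetLike.mem_coe, p.as_sum]
    refine Subalgebra.sum_mem _ fun d hd => ?_
    simpa only [Finsupp.toMultiset_toFinsupp] using
      monomial_toFinsupp_mem_cycleAlgebra (isBalanced_toMultiset_of_mem_support hp hd) (coeff d p)

variable (Q) in
theorem cycMap_eq_aeval_monomial :
    cycMap Q = aeval fun c : {c : Finset Q.A // c ∈ Q.primCycles} =>
      monomial (Multiset.toFinsupp c.1.val) (1 : ℂ) := by
  simp only [cycMap, prod_X_eq_monomial_toFinsupp]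

open MvPolynomial in
/-- for `α ≡ 1`, the invariant ring `ℂ[iss_α Q]` is the monomial
subalgebra of `ℂ[x_a : a ∈ A]` generated by the primitive cycle monomials `x_c`;
the toric ideal `Ker φ` is generated by the binomials it contains; and a binomial
`∏ y_{cᵢ} - ∏ y_{dⱼ}` lies in `Ker φ` iff the multiset sums of arrows agree. -/
theorem stmt_11 (Q : Quiv) :
    ((Algebra.adjoin ℂ (Set.range fun c : {c : Finset Q.A // c ∈ Q.primCycles} =>
        ∏ a ∈ c.1, MvPolynomial.X a) : Subalgebra ℂ (MvPolynomial Q.A ℂ)) : Set (MvPolynomial Q.A ℂ))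
      = {p | ∀ g : Q.V → ℂˣ, torusAct Q g p = p} ∧
    RingHom.ker (cycMap Q).toRingHom =
      Ideal.span {p | p ∈ RingHom.ker (cycMap Q).toRingHom ∧
        ∃ u v : ({c : Finset Q.A // c ∈ Q.primCycles} →₀ ℕ),
          p = monomial u (1 : ℂ) - monomial v 1} ∧
    ∀ u v : ({c : Finset Q.A // c ∈ Q.primCycles} →₀ ℕ),
      (monomial u (1 : ℂ) - monomial v 1 ∈ RingHom.ker (cycMap Q).toRingHom ↔
        (u.sum fun c n => n • (c.1.val : Multiset Q.A)) =
          v.sum fun c n => n • (c.1.val : Multiset Q.A)) := by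
  have hweight : ∀ u : {c : Finset Q.A // c ∈ Q.primCycles} →₀ ℕ,
      (u.sum fun c n => n • Multiset.toFinsupp c.1.val) =
        Multiset.toFinsupp (u.sum fun c n => n • c.1.val) := fun u => by
    simp only [map_finsuppSum, map_nsmul]
  refine ⟨coe_cycleAlgebra_eq_invariants, ?_, fun u v => ?_⟩
  · rw [cycMap_eq_aeval_monomial]
    exact ker_aeval_monomial_one_eq_span_binomials _
  · rw [cycMap_eq_aeval_monomial, monomial_sub_monomial_mem_ker_aeval_monomial_one_iff, hweight,
      hweight, Multiset.toFinsupp.injective.eq_iff]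

end Quiv
end

section
/- For the quiver G1 consisting of two vertices v₁, v₂ with three arrows a, b, c from v₁ to v₂ and two arrows d, e from v₂ to v₁ (all vertices of dimension 1), the number of primitive cycles is 6, the quantity F(G1) = |C| + |V| − |A| − 1 equals 2, but the toric ideal of relations among the 6 cycle monomials requires more than 2 generators; hence G1 is not a complete intersection. -/
namespace Quiv

variable (Q : Quiv)

/-- The quiver `G1`: two vertices with three parallel arrows from the first to the
second and two parallel arrows back. -/
def G1 : Quiv where
  V := Bool
  A := Fin 5
  fintV := inferInstance
  fintA := inferInstance
  decV := inferInstance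
  decA := inferInstance
  s := fun a => if a.1 < 3 then false else true
  t := fun a => if a.1 < 3 then true else false

end Quiv

namespace MvPolynomial

variable {σ : Type*}

theorem coeff_mul_eq_coeff_zero_mul {R : Type*} [CommSemiring R] {d : ℕ} (f : MvPolynomial σ R)
    {p : MvPolynomial σ R} (hp : ∀ m : σ →₀ ℕ, m.degree < d → coeff m p = 0)
    {m : σ →₀ ℕ} (hm : m.degree = d) :
    coeff m (f * p) = coeff 0 f * coeff m p := by
  classical
  rw [coeff_mul]
  refine Finset.sum_eq_single_of_mem (0, m) (by simp) fun ⟨x, y⟩ hxy hne => ?_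
  simp only [Finset.HasAntidiagonal.mem_antidiagonal] at hxy
  have hx : x ≠ 0 := by rintro rfl; simp_all
  have hy : y.degree < d := by
    rw [← hm, ← hxy, map_add]
    have := (Finsupp.degree_eq_zero_iff x).not.mpr hx
    omega
  rw [hp y hy, mul_zero]

theorem homogeneousComponent_mul_eq_coeff_zero_smul {R : Type*} [CommSemiring R] {d : ℕ}
    (f : MvPolynomial σ R) {p : MvPolynomial σ R}
    (hp : ∀ m : σ →₀ ℕ, m.degree < d → coeff m p = 0) :
    homogeneousComponent d (f * p) = coeff 0 f • homogeneousComponent d p := by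
  ext m
  rw [coeff_smul, coeff_homogeneousComponent, coeff_homogeneousComponent]
  split_ifs with hm
  · exact coeff_mul_eq_coeff_zero_mul f hp hm
  · rw [smul_zero]

theorem homogeneousComponent_mem_span_of_mem_ideal_span {R : Type*} [CommSemiring R] {d : ℕ}
    {s : Finset (MvPolynomial σ R)} (hs : ∀ p ∈ s, ∀ m : σ →₀ ℕ, m.degree < d → coeff m p = 0)
    {f : MvPolynomial σ R} (hf : f ∈ Ideal.span (s : Set (MvPolynomial σ R))) :
    homogeneousComponent d f ∈ Submodule.span R (homogeneousComponent d '' s) := by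
  obtain ⟨c, -, rfl⟩ := Submodule.mem_span_finset.mp hf
  rw [map_sum]
  refine Submodule.sum_mem _ fun p hp => ?_
  rw [smul_eq_mul, homogeneousComponent_mul_eq_coeff_zero_smul _ (hs p hp)]
  exact Submodule.smul_mem _ _ (Submodule.subset_span ⟨p, hp, rfl⟩)

theorem card_le_card_of_linearIndependent_of_mem_ideal_span {K ι : Type*} [Field K] [Fintype ι]
    {d : ℕ} {s : Finset (MvPolynomial σ K)}
    (hs : ∀ p ∈ s, ∀ m : σ →₀ ℕ, m.degree < d → coeff m p = 0)
    {M : ι → MvPolynomial σ K} (hM : LinearIndependent K M) (hMd : ∀ i, (M i).IsHomogeneous d)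
    (hMs : ∀ i, M i ∈ Ideal.span (s : Set (MvPolynomial σ K))) :
    Fintype.card ι ≤ s.card := by
  classical
  have hle : Submodule.span K (Set.range M) ≤
      Submodule.span K (↑(s.image (homogeneousComponent d)) : Set (MvPolynomial σ K)) := by
    rw [Submodule.span_le]
    rintro _ ⟨i, rfl⟩
    rw [← homogeneousComponent_eq_self (hMd i), Finset.coe_image]
    exact homogeneousComponent_mem_span_of_mem_ideal_span hs (hMs i)
  calc Fintype.card ι = Module.finrank K (Submodule.span K (Set.range M)) :=
        (finrank_span_eq_card hM).symm
    _ ≤ (s.image (homogeneousComponent d)).card :=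
        (Submodule.finrank_mono hle).trans (finrank_span_finset_le_card _)
    _ ≤ s.card := Finset.card_image_le

theorem linearIndependent_prod_X {R : Type*} [CommSemiring R] :
    LinearIndependent R (fun c : Finset σ => ∏ a ∈ c, (X a : MvPolynomial σ R)) := by
  classical
  have hinj : Function.Injective (fun c : Finset σ => ∑ a ∈ c, Finsupp.single a 1) := by
    intro c c' h
    ext a
    have := DFunLike.congr_fun h a
    simp only [Finsupp.finsetSum_apply, Finsupp.single_apply, Finset.sum_ite_eq'] at this
    by_cases ha : a ∈ c <;> by_cases ha' : a ∈ c' <;> simp_all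
  have hprod : (fun c : Finset σ => ∏ a ∈ c, (X a : MvPolynomial σ R)) =
      basisMonomials σ R ∘ fun c => ∑ a ∈ c, Finsupp.single a 1 := by
    funext c
    simp [monomial_sum_one, X]
  rw [hprod]
  exact (basisMonomials σ R).linearIndependent.comp _ hinj

section Graded

variable {τ R : Type*} [CommRing R] {k : ℕ} {g : τ → MvPolynomial σ R}

theorem homogeneousComponent_aeval (hg : ∀ c, (g c).IsHomogeneous k) (hk : 0 < k)
    (r : MvPolynomial τ R) (n : ℕ) :
    homogeneousComponent (k * n) (aeval g r) = aeval g (homogeneousComponent n r) := by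
  conv_lhs => rw [← sum_homogeneousComponent r]
  simp_rw [map_sum, homogeneousComponent_of_mem
    ((homogeneousComponent_isHomogeneous _ r).aeval g hg), Nat.mul_left_cancel_iff hk]
  rw [Finset.sum_ite_eq]
  split_ifs with hn
  · rfl
  · rw [homogeneousComponent_eq_zero n r (by simpa using hn), map_zero]

theorem eq_zero_of_isHomogeneous_one_of_aeval_eq_zero (hg : LinearIndependent R g)
    {p : MvPolynomial τ R} (hp : p.IsHomogeneous 1) (hgp : aeval g p = 0) : p = 0 := by
  have hp' : p ∈ Submodule.span R (Set.range (X : τ → MvPolynomial τ R)) := by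
    rwa [← homogeneousSubmodule_one_eq_span_X]
  obtain ⟨c, rfl⟩ := Finsupp.mem_span_range_iff_exists_finsupp.mp hp'
  have hc : c = 0 := by
    refine linearIndependent_iff.mp hg c ?_
    simpa [Finsupp.linearCombination_apply, map_finsuppSum] using hgp
  simp [hc]

theorem coeff_eq_zero_of_aeval_eq_zero (hg : ∀ c, (g c).IsHomogeneous k) (hk : 0 < k)
    (hli : LinearIndependent R g) {r : MvPolynomial τ R} (hr : aeval g r = 0)
    {m : τ →₀ ℕ} (hm : m.degree < 2) : coeff m r = 0 := by
  have hker (n : ℕ) : aeval g (homogeneousComponent n r) = 0 := by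
    rw [← homogeneousComponent_aeval hg hk, hr, map_zero]
  suffices homogeneousComponent m.degree r = 0 by
    simpa [coeff_homogeneousComponent] using congr_arg (coeff m) this
  obtain hm0 | hm1 : m.degree = 0 ∨ m.degree = 1 := by omega
  · simpa [hm0] using hker 0
  · rw [hm1]
    exact eq_zero_of_isHomogeneous_one_of_aeval_eq_zero hli
      (homogeneousComponent_isHomogeneous 1 r) (hker 1)

end Graded

end MvPolynomial

open MvPolynomial

namespace Quiv

section Cycles

variable {Q : Quiv}

theorem cyc_pair (a b : Q.A) (hl : [a, b] ≠ []) (i : ℕ) :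
    Q.cyc [a, b] hl i = if i % 2 = 0 then a else b := by
  unfold cyc
  rcases Nat.mod_two_eq_zero_or_one i with h | h <;> simp [h]

theorem isCycleList_pair_iff {a b : Q.A} :
    Q.IsCycleList [a, b] ↔ Q.t a = Q.s b ∧ Q.t b = Q.s a := by
  constructor
  · rintro ⟨hl, h⟩
    simpa [cyc_pair] using And.intro (h 0) (h 1)
  · rintro ⟨hab, hba⟩
    refine ⟨List.cons_ne_nil _ _, fun i => ?_⟩
    rw [cyc_pair, cyc_pair]
    rcases Nat.mod_two_eq_zero_or_one i with h | h <;>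
      simp [h, Nat.succ_mod_two_eq_zero_iff, hab, hba]

theorem NoLoops.not_isCycleList_singleton (hQ : Q.NoLoops) (a : Q.A) : ¬ Q.IsCycleList [a] := by
  rintro ⟨hl, h⟩
  exact hQ a (by simpa [cyc] using (h 0).symm)

theorem NoLoops.isPrimCycle_pair_iff (hQ : Q.NoLoops) {a b : Q.A} :
    Q.IsPrimCycle [a, b] ↔ Q.t a = Q.s b ∧ Q.t b = Q.s a :=
  ⟨fun h => isCycleList_pair_iff.mp h.1,
    fun h => ⟨isCycleList_pair_iff.mpr h, by simpa [← h.1] using hQ a⟩⟩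

theorem IsPrimCycle.length_le_card {l : List Q.A} (h : Q.IsPrimCycle l) :
    l.length ≤ Fintype.card Q.V := by
  simpa using h.2.length_le_card

theorem NoLoops.primCycles_eq_of_card_le_two (hQ : Q.NoLoops) (hV : Fintype.card Q.V ≤ 2) :
    Q.primCycles = {S | ∃ a b, Q.t a = Q.s b ∧ Q.t b = Q.s a ∧ {a, b} = S} := by
  ext S
  constructor
  · rintro ⟨l, hl, rfl⟩
    match l, hl.length_le_card.trans hV, hl with
    | [], _, h => exact absurd rfl h.1.1
    | [a], _, h => exact absurd h.1 (hQ.not_isCycleList_singleton a)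
    | [a, b], _, h =>
      obtain ⟨hab, hba⟩ := hQ.isPrimCycle_pair_iff.mp h
      exact ⟨a, b, hab, hba, by simp⟩
    | _ :: _ :: _ :: _, hlen, _ => simp at hlen
  · rintro ⟨a, b, hab, hba, rfl⟩
    exact ⟨[a, b], hQ.isPrimCycle_pair_iff.mpr ⟨hab, hba⟩, by simp⟩

end Cycles

theorem G1.noLoops : G1.NoLoops := by
  unfold NoLoops
  decide

-- the arrows `a, b, c : v₁ → v₂` and `d, e : v₂ → v₁`
def G1.out (i : Fin 3) : G1.A := Fin.castAdd 2 i

def G1.back (j : Fin 2) : G1.A := Fin.natAdd 3 j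

def G1.cycle (i : Fin 3) (j : Fin 2) : Finset G1.A := {G1.out i, G1.back j}

theorem G1.primCycles_eq :
    G1.primCycles = Set.range fun ij : Fin 3 × Fin 2 => G1.cycle ij.1 ij.2 := by
  rw [G1.noLoops.primCycles_eq_of_card_le_two le_rfl]
  have hcycle : ∀ a b : G1.A, G1.t a = G1.s b → G1.t b = G1.s a →
      ∃ ij : Fin 3 × Fin 2, G1.cycle ij.1 ij.2 = {a, b} := by decide
  have hpair : ∀ i j, G1.t (G1.out i) = G1.s (G1.back j) ∧ G1.t (G1.back j) = G1.s (G1.out i) := by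
    decide
  ext S
  constructor
  · rintro ⟨a, b, hab, hba, rfl⟩
    exact hcycle a b hab hba
  · rintro ⟨⟨i, j⟩, rfl⟩
    exact ⟨_, _, (hpair i j).1, (hpair i j).2, rfl⟩

theorem G1.card_eq_two_of_mem_primCycles {c : Finset G1.A} (hc : c ∈ G1.primCycles) :
    c.card = 2 := by
  rw [G1.primCycles_eq] at hc
  obtain ⟨⟨i, j⟩, rfl⟩ := hc
  revert i j
  decide

theorem G1.numPrimCycles_eq : G1.numPrimCycles = 6 := by
  rw [numPrimCycles, G1.primCycles_eq, Set.ncard_range_of_injective (by decide),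
    Nat.card_eq_fintype_card]
  rfl

theorem G1.F_eq : G1.F = 2 := by
  rw [F, G1.numPrimCycles_eq]
  rfl

theorem coeff_eq_zero_of_cycMap_eq_zero {Q : Quiv} {k : ℕ} (hk : 0 < k)
    (hQ : ∀ c ∈ Q.primCycles, c.card = k) {r : MvPolynomial {c // c ∈ Q.primCycles} ℂ}
    (hr : cycMap Q r = 0) {m : {c // c ∈ Q.primCycles} →₀ ℕ} (hm : m.degree < 2) :
    coeff m r = 0 := by
  refine coeff_eq_zero_of_aeval_eq_zero (fun c => ?_) hk
    (linearIndependent_prod_X.comp _ Subtype.val_injective) hr hm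
  simpa [hQ c.1 c.2] using IsHomogeneous.prod c.1 (fun a => (X a : MvPolynomial Q.A ℂ)) (fun _ => 1)
    (fun a _ => isHomogeneous_X ℂ a)

def G1.z (i : Fin 3) (j : Fin 2) : {c // c ∈ G1.primCycles} :=
  ⟨G1.cycle i j, by rw [G1.primCycles_eq]; exact ⟨(i, j), rfl⟩⟩

theorem G1.z_inj {i i' : Fin 3} {j j' : Fin 2} : G1.z i j = G1.z i' j' ↔ i = i' ∧ j = j' := by
  revert i i' j j'
  decide

theorem G1.cycMap_X_z (i : Fin 3) (j : Fin 2) :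
    cycMap G1 (X (G1.z i j)) = X (G1.out i) * X (G1.back j) := by
  rw [cycMap, aeval_X]
  exact Finset.prod_pair (by revert i j; decide)

noncomputable def G1.minor (i i' : Fin 3) : MvPolynomial {c // c ∈ G1.primCycles} ℂ :=
  X (G1.z i 0) * X (G1.z i' 1) - X (G1.z i 1) * X (G1.z i' 0)

theorem G1.cycMap_minor (i i' : Fin 3) : cycMap G1 (G1.minor i i') = 0 := by
  simp only [G1.minor, map_sub, map_mul, G1.cycMap_X_z]
  ring

theorem G1.isHomogeneous_minor (i i' : Fin 3) : (G1.minor i i').IsHomogeneous 2 :=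
  ((isHomogeneous_X _ _).mul (isHomogeneous_X _ _)).sub
    ((isHomogeneous_X _ _).mul (isHomogeneous_X _ _))

theorem G1.linearIndependent_minors :
    LinearIndependent ℂ ![G1.minor 0 1, G1.minor 0 2, G1.minor 1 2] := by
  rw [Fintype.linearIndependent_iff]
  intro w hw
  -- at the point with `z i 0 = z i' 1 = 1` and all other variables `0`, only `minor i i'` survives
  have heval (i i' : Fin 3) :=
    congr_arg (eval fun y => if y = G1.z i 0 ∨ y = G1.z i' 1 then (1 : ℂ) else 0) hw
  have h0 := heval 0 1
  have h1 := heval 0 2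
  have h2 := heval 1 2
  simp [Fin.sum_univ_three, G1.minor, G1.z_inj] at h0 h1 h2
  intro k
  fin_cases k
  exacts [h0, h1, h2]

/-- `G1` has 6 primitive cycles, `F(G1) = |C| + |V| - |A| - 1 = 2`, but
the toric ideal of relations among the six cycle monomials cannot be generated by 2
elements; hence `G1` is not a complete intersection. -/
theorem stmt_16 :
    G1.numPrimCycles = 6 ∧ G1.F = 2 ∧
    ¬ ∃ p q : MvPolynomial {c : Finset G1.A // c ∈ G1.primCycles} ℂ,
      RingHom.ker (cycMap G1).toRingHom = Ideal.span {p, q} := by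
  refine ⟨G1.numPrimCycles_eq, G1.F_eq, ?_⟩
  rintro ⟨p, q, hker⟩
  rw [← Finset.coe_pair] at hker
  have hlow : ∀ f ∈ ({p, q} : Finset _), ∀ m : _ →₀ ℕ, m.degree < 2 → coeff m f = 0 := by
    intro f hf m hm
    have hf' : f ∈ RingHom.ker (cycMap G1).toRingHom := hker ▸ Ideal.subset_span hf
    exact coeff_eq_zero_of_cycMap_eq_zero two_pos (fun _ => G1.card_eq_two_of_mem_primCycles) hf' hm
  have hminors (i : Fin 3) : ![G1.minor 0 1, G1.minor 0 2, G1.minor 1 2] i ∈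
      Ideal.span (({p, q} : Finset _) : Set (MvPolynomial _ ℂ)) := by
    rw [← hker, RingHom.mem_ker]
    fin_cases i <;> exact G1.cycMap_minor _ _
  have hcard := (card_le_card_of_linearIndependent_of_mem_ideal_span hlow
    G1.linearIndependent_minors (fun i => by fin_cases i <;> exact G1.isHomogeneous_minor _ _)
    hminors).trans Finset.card_le_two
  simp at hcard

end Quiv
end

section
/- Let Q be a strongly connected quiver on n+1 ≥ 3 vertices with no loops, in which every vertex has in-degree and out-degree at least 2, and in which some primitive cycle has length strictly less than n+1. Let Q' be the quotient quiver obtained by gluing the vertices of such a shorter primitive cycle into one vertex and Q'' the quiver obtained from Q' by deleting all loops. Then Q'' is strongly connected, has at least 2 and at most n vertices, and every vertex of Q'' except possibly the glued vertex has in-degree and out-degree at least 2. -/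
namespace Quiv

variable (Q : Quiv)

/-- The quiver obtained from `Q` by gluing the set `S` of vertices into a single
vertex `Sum.inr ()` and deleting the resulting loops (the arrows with both
endpoints in `S`). -/
def glueDel (Q : Quiv) (S : Finset Q.V) : Quiv where
  V := {v : Q.V // v ∉ S} ⊕ Unit
  A := {a : Q.A // ¬(Q.s a ∈ S ∧ Q.t a ∈ S)}
  fintV := inferInstance
  fintA := inferInstance
  decV := inferInstance
  decA := inferInstance
  s := fun a => if h : Q.s a.1 ∈ S then Sum.inr () else Sum.inl ⟨Q.s a.1, h⟩
  t := fun a => if h : Q.t a.1 ∈ S then Sum.inr () else Sum.inl ⟨Q.t a.1, h⟩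

/-! Gluing `S` maps vertices onto the glued quiver and sends every path to a path: an arrow
with both ends in `S` collapses to the glued vertex, every other arrow survives. A vertex
outside `S` keeps all of its arrows, and the number of vertices drops by `|S| - 1`, where `|S|`
is the length of the primitive cycle, which is at least 2 because `Q` has no loops. -/

def glueMap (S : Finset Q.V) (v : Q.V) : (Q.glueDel S).V :=
  if h : v ∈ S then Sum.inr () else Sum.inl ⟨v, h⟩

variable {Q} {S : Finset Q.V}

theorem glueMap_of_mem {v : Q.V} (hv : v ∈ S) : Q.glueMap S v = Sum.inr () :=
  dif_pos hv

theorem glueMap_of_notMem {v : Q.V} (hv : v ∉ S) : Q.glueMap S v = Sum.inl ⟨v, hv⟩ :=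
  dif_neg hv

theorem reflTransGen_glueMap_of_step {u v : Q.V} (h : Q.Step u v) :
    Relation.ReflTransGen (Q.glueDel S).Step (Q.glueMap S u) (Q.glueMap S v) := by
  obtain ⟨a, rfl, rfl⟩ := h
  by_cases hS : Q.s a ∈ S ∧ Q.t a ∈ S
  · rw [glueMap_of_mem hS.1, glueMap_of_mem hS.2]
    exact .refl
  · exact .single ⟨⟨a, hS⟩, rfl, rfl⟩

theorem glueMap_surjective (hS : S.Nonempty) : Function.Surjective (Q.glueMap S) := by
  rintro (⟨v, hv⟩ | ⟨⟩)
  · exact ⟨v, glueMap_of_notMem hv⟩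
  · obtain ⟨v, hv⟩ := hS
    exact ⟨v, glueMap_of_mem hv⟩

theorem StronglyConnected.glueDel (hSC : Q.StronglyConnected) (hS : S.Nonempty) :
    (Q.glueDel S).StronglyConnected := by
  intro x y
  obtain ⟨u, rfl⟩ := glueMap_surjective hS x
  obtain ⟨v, rfl⟩ := glueMap_surjective hS y
  exact Relation.ReflTransGen.lift' _ (fun _ _ => reflTransGen_glueMap_of_step) _ _ (hSC u v)

theorem card_glueDel_V : Fintype.card (Q.glueDel S).V = Fintype.card Q.V - S.card + 1 := by
  change Fintype.card ({v : Q.V // v ∉ S} ⊕ Unit) = _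
  rw [Fintype.card_sum, Fintype.card_unit, ← Fintype.card_coe S, Fintype.card_subtype_compl]

theorem glueMap_eq_glueMap_iff {v w : Q.V} (hw : w ∉ S) :
    Q.glueMap S v = Q.glueMap S w ↔ v = w := by
  refine ⟨fun h => ?_, congrArg _⟩
  by_cases hv : v ∈ S
  · rw [glueMap_of_mem hv, glueMap_of_notMem hw] at h
    exact absurd h Sum.inr_ne_inl
  · rw [glueMap_of_notMem hv, glueMap_of_notMem hw] at h
    exact congrArg Subtype.val (Sum.inl_injective h)

theorem inDeg_glueDel_glueMap {w : Q.V} (hw : w ∉ S) :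
    (Q.glueDel S).inDeg (Q.glueMap S w) = Q.inDeg w :=
  Finset.card_bij' (fun a _ => a.1)
    (fun a ha => ⟨a, fun h => hw (((Finset.mem_filter_univ a).mp ha) ▸ h.2)⟩)
    (fun a ha => (Finset.mem_filter_univ _).mpr ((glueMap_eq_glueMap_iff hw).mp
      ((Finset.mem_filter_univ a).mp ha)))
    (fun a ha => (Finset.mem_filter_univ _).mpr ((glueMap_eq_glueMap_iff hw).mpr
      ((Finset.mem_filter_univ a).mp ha)))
    (fun _ _ => rfl) (fun _ _ => rfl)

theorem outDeg_glueDel_glueMap {w : Q.V} (hw : w ∉ S) :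
    (Q.glueDel S).outDeg (Q.glueMap S w) = Q.outDeg w :=
  Finset.card_bij' (fun a _ => a.1)
    (fun a ha => ⟨a, fun h => hw (((Finset.mem_filter_univ a).mp ha) ▸ h.1)⟩)
    (fun a ha => (Finset.mem_filter_univ _).mpr ((glueMap_eq_glueMap_iff hw).mp
      ((Finset.mem_filter_univ a).mp ha)))
    (fun a ha => (Finset.mem_filter_univ _).mpr ((glueMap_eq_glueMap_iff hw).mpr
      ((Finset.mem_filter_univ a).mp ha)))
    (fun _ _ => rfl) (fun _ _ => rfl)

theorem IsPrimCycle.card_vertices {l : List Q.A} (hl : Q.IsPrimCycle l) :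
    (l.map Q.s).toFinset.card = l.length := by
  rw [List.toFinset_card_of_nodup hl.2, List.length_map]

theorem IsCycleList.two_le_length (hNL : Q.NoLoops) {l : List Q.A} (hl : Q.IsCycleList l) :
    2 ≤ l.length := by
  obtain ⟨hne, hcyc⟩ := hl
  have hpos : 0 < l.length := List.length_pos_iff.mpr hne
  by_contra! hlt
  have hcyc0 := hcyc 0
  have : Q.cyc l hne 1 = Q.cyc l hne 0 := by
    unfold cyc
    congr 1
    exact Fin.ext (by omega)
  rw [this] at hcyc0
  exact hNL _ hcyc0.symm

theorem stmt_17_general (Q : Quiv) (n : ℕ) (hcard : Fintype.card Q.V = n + 1)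
    (hSC : Q.StronglyConnected) (hNL : Q.NoLoops)
    (hdeg : ∀ v : Q.V, 2 ≤ Q.inDeg v ∧ 2 ≤ Q.outDeg v)
    (l : List Q.A) (hl : Q.IsPrimCycle l) (hlen : l.length < n + 1) :
    (Q.glueDel (l.map Q.s).toFinset).StronglyConnected ∧
    2 ≤ Fintype.card (Q.glueDel (l.map Q.s).toFinset).V ∧
    Fintype.card (Q.glueDel (l.map Q.s).toFinset).V ≤ n ∧
    ∀ v : (Q.glueDel (l.map Q.s).toFinset).V, v ≠ Sum.inr () →
      2 ≤ (Q.glueDel (l.map Q.s).toFinset).inDeg v ∧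
      2 ≤ (Q.glueDel (l.map Q.s).toFinset).outDeg v := by
  have hcycle_len := hl.1.two_le_length hNL
  have hcard_glued : Fintype.card (Q.glueDel (l.map Q.s).toFinset).V = n + 1 - l.length + 1 := by
    rw [card_glueDel_V, hl.card_vertices, hcard]
  have hne : (l.map Q.s).toFinset.Nonempty := by
    rw [← Finset.card_pos, hl.card_vertices]
    omega
  refine ⟨hSC.glueDel hne, by omega, by omega, ?_⟩
  rintro (⟨w, hw⟩ | ⟨⟩) hv
  · rw [← glueMap_of_notMem hw, inDeg_glueDel_glueMap hw, outDeg_glueDel_glueMap hw]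
    exact hdeg w
  · exact (hv rfl).elim

/-- let `Q` be strongly connected and loop-free on `n+1 ≥ 3` vertices,
all in- and out-degrees at least 2, and let `l` be a primitive cycle of length less
than `n+1`. Gluing the vertices of `l` into one vertex and deleting all loops yields
a strongly connected quiver `Q''` with at least 2 and at most `n` vertices in which
every vertex except possibly the glued vertex has in- and out-degree at least 2. -/
theorem stmt_17 (Q : Quiv) (n : ℕ) (h3 : 3 ≤ n + 1) (hcard : Fintype.card Q.V = n + 1)
    (hSC : Q.StronglyConnected) (hNL : Q.NoLoops)
    (hdeg : ∀ v : Q.V, 2 ≤ Q.inDeg v ∧ 2 ≤ Q.outDeg v)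
    (l : List Q.A) (hl : Q.IsPrimCycle l) (hlen : l.length < n + 1) :
    (Q.glueDel (l.map Q.s).toFinset).StronglyConnected ∧
    2 ≤ Fintype.card (Q.glueDel (l.map Q.s).toFinset).V ∧
    Fintype.card (Q.glueDel (l.map Q.s).toFinset).V ≤ n ∧
    ∀ v : (Q.glueDel (l.map Q.s).toFinset).V, v ≠ Sum.inr () →
      2 ≤ (Q.glueDel (l.map Q.s).toFinset).inDeg v ∧
      2 ≤ (Q.glueDel (l.map Q.s).toFinset).outDeg v :=
  stmt_17_general Q n hcard hSC hNL hdeg l hl hlen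

end Quiv
end
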